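/- arXiv:2510.25398 — 2 statements merged into one kernel-verified Lean document; each statement's English description precedes it below -/
import Mathlib

section
/- Let θ ∈ ℝ, let φ : (0,∞) → ℝ be a function, and let x ∈ ℝⁿ with ⟨e,x⟩ > 0. Suppose m : [0,∞) → (0,∞) is differentiable with m′(t) = (φ(m(t)) − fθ) m(t) and m(0) = ⟨e,x⟩, and Y : [0,∞) → ℝⁿ is differentiable with Y′(t) = (D+Bᵀ − θE + fθI) Y(t) and Y(0) = x/⟨e,x⟩. Then ⟨e,Y(t)⟩ = 1 for all t ≥ 0, and X := mY satisfies ⟨e,X(t)⟩ = m(t), X′(t) = φ(⟨e,X(t)⟩) X(t) + (D+Bᵀ − θE) X(t) and X(0) = x. Conversely, if X : [0,∞) → ℝⁿ is differentiable with X′(t) = φ(⟨e,X(t)⟩) X(t) + (D+Bᵀ − θE) X(t), X(0) = x and ⟨e,X(t)⟩ > 0 for all t ≥ 0, then m := ⟨e,X⟩ and Y := X/m satisfy the two equations above. -/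
/-!
Since `B` has zero diagonal, the columns of `(D + B)ᵀ` sum to zero, while each column of `E`
sums to `f`; hence `eᵀ(D + Bᵀ − θE) = −fθ eᵀ`. Summing the state equation therefore gives the
mass equation `m′ = (φ(m) − fθ)m`, and the shares `X/m` solve the linear system with matrix
`D + Bᵀ − θE + fθI`, whose column sums vanish, so `⟨e,Y⟩` is conserved. Both directions are then
the product rule, resp. the quotient rule, applied to `X = mY`.
-/

open Matrix Finset

/-- The diagonal matrix of outflows: `D i i = -∑_{j ≠ i} B i j`. -/
noncomputable def Dmat {n : ℕ} (B : Matrix (Fin n) (Fin n) ℝ) : Matrix (Fin n) (Fin n) ℝ :=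
  Matrix.diagonal fun i => -∑ j ∈ Finset.univ.erase i, B i j

/-- The matrix `E = ξ eᵀ`, whose `i`-th row is the all-ones row for `i ∈ F` and zero
otherwise. -/
def Emat {n : ℕ} (F : Finset (Fin n)) : Matrix (Fin n) (Fin n) ℝ :=
  fun i _ => if i ∈ F then 1 else 0

section MassShares

variable {ι : Type*} [Fintype ι] {A : Matrix ι ι ℝ} {c : ℝ}

theorem sum_mulVec_of_one_vecMul (hA : 1 ᵥ* A = -c • 1) (v : ι → ℝ) :
    ∑ i, (A *ᵥ v) i = -c * ∑ i, v i := by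
  rw [← one_dotProduct, dotProduct_mulVec, hA, smul_dotProduct, one_dotProduct, smul_eq_mul]

theorem HasDerivAt.fun_sum_apply {X : ℝ → ι → ℝ} {X' : ι → ℝ} {t : ℝ}
    (hX : HasDerivAt X X' t) : HasDerivAt (fun s => ∑ i, X s i) (∑ i, X' i) t :=
  HasDerivAt.fun_sum fun i _ => hasDerivAt_pi.mp hX i

theorem hasDerivAt_sum_of_closedLoop (hA : 1 ᵥ* A = -c • 1) {φ : ℝ → ℝ} {X : ℝ → ι → ℝ}
    {t : ℝ} (hX : HasDerivAt X (φ (∑ i, X t i) • X t + A *ᵥ X t) t) :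
    HasDerivAt (fun s => ∑ i, X s i) ((φ (∑ i, X t i) - c) * ∑ i, X t i) t := by
  convert hX.fun_sum_apply using 1
  simp only [Pi.add_apply, Pi.smul_apply, smul_eq_mul, sum_add_distrib, ← mul_sum,
    sum_mulVec_of_one_vecMul hA]
  ring

variable [DecidableEq ι]

theorem add_smul_one_mulVec (v : ι → ℝ) : (A + c • 1) *ᵥ v = A *ᵥ v + c • v := by
  rw [add_mulVec, smul_mulVec, one_mulVec]

theorem hasDerivAt_sum_of_shares (hA : 1 ᵥ* A = -c • 1) {Y : ℝ → ι → ℝ} {t : ℝ}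
    (hY : HasDerivAt Y ((A + c • 1) *ᵥ Y t) t) : HasDerivAt (fun s => ∑ i, Y s i) 0 t := by
  convert hY.fun_sum_apply using 1
  simp only [add_smul_one_mulVec, Pi.add_apply, Pi.smul_apply, smul_eq_mul, sum_add_distrib,
    ← mul_sum, sum_mulVec_of_one_vecMul hA]
  ring

theorem sum_eq_of_shares (hA : 1 ᵥ* A = -c • 1) {Y : ℝ → ι → ℝ}
    (hY : ∀ t, 0 ≤ t → HasDerivAt Y ((A + c • 1) *ᵥ Y t) t) {t : ℝ} (ht : 0 ≤ t) :
    ∑ i, Y t i = ∑ i, Y 0 i := by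
  have hderiv u (hu : 0 ≤ u) := hasDerivAt_sum_of_shares hA (hY u hu)
  exact constant_of_has_deriv_right_zero
    (fun u hu => (hderiv u hu.1).continuousAt.continuousWithinAt)
    (fun u hu => (hderiv u hu.1).hasDerivWithinAt) t ⟨ht, le_rfl⟩

theorem hasDerivAt_smul_of_mass_shares {φ : ℝ → ℝ} {m : ℝ → ℝ} {Y : ℝ → ι → ℝ} {t : ℝ}
    (hm : HasDerivAt m ((φ (m t) - c) * m t) t) (hY : HasDerivAt Y ((A + c • 1) *ᵥ Y t) t) :
    HasDerivAt (fun s => m s • Y s) (φ (m t) • (m t • Y t) + A *ᵥ (m t • Y t)) t := by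
  refine (hm.smul hY).congr_deriv ?_
  rw [add_smul_one_mulVec, mulVec_smul]
  module

theorem hasDerivAt_inv_sum_smul_of_closedLoop (hA : 1 ᵥ* A = -c • 1) {φ : ℝ → ℝ}
    {X : ℝ → ι → ℝ} {t : ℝ} (hX : HasDerivAt X (φ (∑ i, X t i) • X t + A *ᵥ X t) t)
    (hne : ∑ i, X t i ≠ 0) :
    HasDerivAt (fun s => (∑ i, X s i)⁻¹ • X s) ((A + c • 1) *ᵥ ((∑ i, X t i)⁻¹ • X t)) t := by
  refine (((hasDerivAt_sum_of_closedLoop hA hX).inv hne).smul hX).congr_deriv ?_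
  rw [add_smul_one_mulVec, mulVec_smul]
  have hcoef : -((φ (∑ i, X t i) - c) * ∑ i, X t i) / (∑ i, X t i) ^ 2
      = (c - φ (∑ i, X t i)) * (∑ i, X t i)⁻¹ := by
    field_simp
    ring
  rw [hcoef]
  module

end MassShares

section RowSums

variable {n : ℕ}

theorem Dmat_add_mulVec_one {B : Matrix (Fin n) (Fin n) ℝ} (hdiag : ∀ i, B i i = 0) :
    (Dmat B + B) *ᵥ 1 = 0 := by
  ext i
  have hrow : (B *ᵥ 1) i = B i i + ∑ j ∈ univ.erase i, B i j := by
    simp [mulVec, dotProduct]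
  rw [add_mulVec, Pi.add_apply, hrow, hdiag, Dmat, mulVec_diagonal]
  simp

theorem one_vecMul_Emat (F : Finset (Fin n)) : 1 ᵥ* Emat F = (F.card : ℝ) • 1 := by
  ext j
  simp [vecMul, dotProduct, Emat]

theorem one_vecMul_closedLoop {B : Matrix (Fin n) (Fin n) ℝ} (hdiag : ∀ i, B i i = 0)
    (F : Finset (Fin n)) (θ : ℝ) :
    1 ᵥ* ((Dmat B + B)ᵀ - θ • Emat F) = -((F.card : ℝ) * θ) • 1 := by
  rw [vecMul_sub, vecMul_transpose, Dmat_add_mulVec_one hdiag, vecMul_smul, one_vecMul_Emat,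
    smul_smul, zero_sub, neg_smul, mul_comm]

end RowSums

theorem stmt8_general {n : ℕ} (B : Matrix (Fin n) (Fin n) ℝ)
    (hdiag : ∀ i, B i i = 0)
    (F : Finset (Fin n))
    (θ : ℝ) (φ : ℝ → ℝ) (x : Fin n → ℝ) (hx : 0 < ∑ i, x i) :
    (∀ (m : ℝ → ℝ) (Y : ℝ → Fin n → ℝ),
      (∀ t : ℝ, 0 ≤ t → 0 < m t) →
      (∀ t : ℝ, 0 ≤ t → HasDerivAt m ((φ (m t) - F.card * θ) * m t) t) →
      m 0 = ∑ i, x i →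
      (∀ t : ℝ, 0 ≤ t → HasDerivAt Y
        (((Dmat B + B)ᵀ - θ • Emat F + ((F.card : ℝ) * θ) • 1) *ᵥ Y t) t) →
      Y 0 = (∑ i, x i)⁻¹ • x →
      (∀ t : ℝ, 0 ≤ t → (∑ i, Y t i) = 1) ∧
      (∀ t : ℝ, 0 ≤ t → (∑ i, (m t • Y t) i) = m t) ∧
      (∀ t : ℝ, 0 ≤ t → HasDerivAt (fun s => m s • Y s)
        ((φ (∑ i, (m t • Y t) i)) • (m t • Y t)
          + ((Dmat B + B)ᵀ - θ • Emat F) *ᵥ (m t • Y t)) t) ∧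
      m 0 • Y 0 = x) ∧
    (∀ X : ℝ → Fin n → ℝ,
      (∀ t : ℝ, 0 ≤ t → HasDerivAt X
        ((φ (∑ i, X t i)) • X t + ((Dmat B + B)ᵀ - θ • Emat F) *ᵥ X t) t) →
      X 0 = x →
      (∀ t : ℝ, 0 ≤ t → 0 < ∑ i, X t i) →
      (∀ t : ℝ, 0 ≤ t → HasDerivAt (fun s => ∑ i, X s i)
        ((φ (∑ i, X t i) - F.card * θ) * (∑ i, X t i)) t) ∧
      (∑ i, X 0 i) = ∑ i, x i ∧
      (∀ t : ℝ, 0 ≤ t → HasDerivAt (fun s => (∑ i, X s i)⁻¹ • X s)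
        (((Dmat B + B)ᵀ - θ • Emat F + ((F.card : ℝ) * θ) • 1) *ᵥ
          ((∑ i, X t i)⁻¹ • X t)) t) ∧
      (∑ i, X 0 i)⁻¹ • X 0 = (∑ i, x i)⁻¹ • x) := by
  have hA := one_vecMul_closedLoop hdiag F θ
  refine ⟨fun m Y _ hm hm0 hY hY0 => ?_, fun X hX hX0 hXpos => ?_⟩
  · have hshares t (ht : 0 ≤ t) : ∑ i, Y t i = 1 := by
      rw [sum_eq_of_shares hA hY ht, hY0]
      simp only [Pi.smul_apply, smul_eq_mul, ← mul_sum]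
      exact inv_mul_cancel₀ hx.ne'
    have hmass t (ht : 0 ≤ t) : ∑ i, (m t • Y t) i = m t := by
      simp only [Pi.smul_apply, smul_eq_mul, ← mul_sum, hshares t ht, mul_one]
    refine ⟨hshares, hmass, fun t ht => ?_, ?_⟩
    · rw [hmass t ht]
      exact hasDerivAt_smul_of_mass_shares (hm t ht) (hY t ht)
    · rw [hm0, hY0, smul_smul, mul_inv_cancel₀ hx.ne', one_smul]
  · exact ⟨fun t ht => hasDerivAt_sum_of_closedLoop hA (hX t ht), by rw [hX0],
      fun t ht => hasDerivAt_inv_sum_smul_of_closedLoop hA (hX t ht) (hXpos t ht).ne',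
      by rw [hX0]⟩

/-- Equivalence between the closed-loop state equation
`X′ = φ(⟨e,X⟩)X + (D+Bᵀ − θE)X`, `X(0) = x`, and the coupled mass/shares system
`m′ = (φ(m) − fθ)m`, `Y′ = (D+Bᵀ − θE + fθI)Y`. -/
theorem stmt8 {n : ℕ} (B : Matrix (Fin n) (Fin n) ℝ)
    (hB : ∀ i j, 0 ≤ B i j) (hdiag : ∀ i, B i i = 0)
    (F : Finset (Fin n)) (hF : F.Nonempty)
    (θ : ℝ) (φ : ℝ → ℝ) (x : Fin n → ℝ) (hx : 0 < ∑ i, x i) :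
    (∀ (m : ℝ → ℝ) (Y : ℝ → Fin n → ℝ),
      (∀ t : ℝ, 0 ≤ t → 0 < m t) →
      (∀ t : ℝ, 0 ≤ t → HasDerivAt m ((φ (m t) - F.card * θ) * m t) t) →
      m 0 = ∑ i, x i →
      (∀ t : ℝ, 0 ≤ t → HasDerivAt Y
        (((Dmat B + B)ᵀ - θ • Emat F + ((F.card : ℝ) * θ) • 1) *ᵥ Y t) t) →
      Y 0 = (∑ i, x i)⁻¹ • x →
      (∀ t : ℝ, 0 ≤ t → (∑ i, Y t i) = 1) ∧
      (∀ t : ℝ, 0 ≤ t → (∑ i, (m t • Y t) i) = m t) ∧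
      (∀ t : ℝ, 0 ≤ t → HasDerivAt (fun s => m s • Y s)
        ((φ (∑ i, (m t • Y t) i)) • (m t • Y t)
          + ((Dmat B + B)ᵀ - θ • Emat F) *ᵥ (m t • Y t)) t) ∧
      m 0 • Y 0 = x) ∧
    (∀ X : ℝ → Fin n → ℝ,
      (∀ t : ℝ, 0 ≤ t → HasDerivAt X
        ((φ (∑ i, X t i)) • X t + ((Dmat B + B)ᵀ - θ • Emat F) *ᵥ X t) t) →
      X 0 = x →
      (∀ t : ℝ, 0 ≤ t → 0 < ∑ i, X t i) →
      (∀ t : ℝ, 0 ≤ t → HasDerivAt (fun s => ∑ i, X s i)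
        ((φ (∑ i, X t i) - F.card * θ) * (∑ i, X t i)) t) ∧
      (∑ i, X 0 i) = ∑ i, x i ∧
      (∀ t : ℝ, 0 ≤ t → HasDerivAt (fun s => (∑ i, X s i)⁻¹ • X s)
        (((Dmat B + B)ᵀ - θ • Emat F + ((F.card : ℝ) * θ) • 1) *ᵥ
          ((∑ i, X t i)⁻¹ • X t)) t) ∧
      (∑ i, X 0 i)⁻¹ • X 0 = (∑ i, x i)⁻¹ • x) :=
  stmt8_general B hdiag F θ φ x hx
end

section
/- Let θ* := (ρ + Γ/K)/f, A := 1/θ* and B := (Γ − fθ* + fθ* ln θ*)/(θ*ρ). Define w(x) := A ln⟨e,x⟩ + B for x ∈ ℝⁿ₊ \ {0}. Then w is continuously differentiable on ℝⁿ₊ \ {0} with ∂w/∂x_j(x) = A/⟨e,x⟩ > 0 for every j, and for every x ∈ ℝⁿ₊ \ {0}: ρ w(x) = −∑_{i∈F} ln(∂w/∂x_i(x)) − f + ⟨∇w(x), (D+Bᵀ)x⟩ + Γ(1 − ln⟨e,x⟩/K) ⟨∇w(x), x⟩. Moreover, for each i ∈ F, the supremum over c > 0 of ln c − c·∂w/∂x_i(x)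 equals −ln(∂w/∂x_i(x)) − 1 and is attained uniquely at c = θ*⟨e,x⟩. -/
open Matrix Finset Real

/-- The continuous linear functional `y ↦ ∑ j, p j * y j` on `ℝⁿ`. -/
noncomputable def dotCLM {n : ℕ} (p : Fin n → ℝ) : (Fin n → ℝ) →L[ℝ] ℝ :=
  LinearMap.toContinuousLinearMap
    { toFun := fun y => ∑ j, p j * y j
      map_add' := fun y z => by
        simp [Pi.add_apply, mul_add, Finset.sum_add_distrib]
      map_smul' := fun a y => by
        simp only [Pi.smul_apply, smul_eq_mul, RingHom.id_apply, Finset.mul_sum]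
        exact Finset.sum_congr rfl fun j _ => by ring }

/-!
Everything depends on `x` only through the total stock `S = ⟨e, x⟩`, and the transition matrix
`D + B` has zero row sums, so the migration term `⟨∇w, (D + Bᵀ) x⟩ = (A / S) ⟨e, (D + B)ᵀ x⟩`
vanishes. Since `⟨∇w, x⟩ = A`, the HJB equation reduces to a scalar identity affine in `ln S`,
and `A`, `Bc` are exactly the coefficients matching its `ln S` and constant parts. The Hamiltonian
part is the inequality `ln t ≤ t - 1`, with equality only at `t = 1`, applied to `t = c · A / S`.
-/

theorem Dmat_add_self_mulVec_one {n : ℕ} {B : Matrix (Fin n) (Fin n) ℝ}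
    (hdiag : ∀ i, B i i = 0) : (Dmat B + B) *ᵥ 1 = 0 := by
  ext k
  rw [add_mulVec, Pi.add_apply, Dmat, mulVec_diagonal]
  simp only [mulVec, dotProduct, Pi.one_apply, mul_one, Pi.zero_apply]
  rw [← Finset.add_sum_erase _ _ (mem_univ k), hdiag k]
  ring

theorem sum_transpose_mulVec_eq_zero {ι : Type*} [Fintype ι] {M : Matrix ι ι ℝ}
    (hM : M *ᵥ 1 = 0) (x : ι → ℝ) : ∑ j, (Mᵀ *ᵥ x) j = 0 := by
  rw [← one_dotProduct, dotProduct_mulVec, vecMul_transpose, hM, zero_dotProduct]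

theorem sum_pos_of_nonneg_of_ne_zero {ι : Type*} [Fintype ι] {x : ι → ℝ}
    (hx : ∀ j, 0 ≤ x j) (hx0 : x ≠ 0) : 0 < ∑ j, x j := by
  obtain ⟨i, hi⟩ := Function.ne_iff.mp hx0
  exact Finset.sum_pos' (fun j _ => hx j) ⟨i, mem_univ i, (hx i).lt_of_ne' hi⟩

@[simp]
theorem dotCLM_apply {n : ℕ} (p y : Fin n → ℝ) : dotCLM p y = ∑ j, p j * y j := rfl

theorem hasFDerivAt_mul_log_sum_add {n : ℕ} (a b : ℝ) {x : Fin n → ℝ} (hx : 0 < ∑ j, x j) :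
    HasFDerivAt (fun y : Fin n → ℝ => a * log (∑ j, y j) + b)
      (dotCLM fun _ => a / ∑ j, x j) x := by
  have hsum : HasFDerivAt (fun y : Fin n → ℝ => ∑ j, y j) (dotCLM fun _ => 1) x := by
    convert (dotCLM fun _ : Fin n => (1 : ℝ)).hasFDerivAt (x := x) using 1
    ext y
    simp
  refine (((hasDerivAt_log hx.ne').comp_hasFDerivAt x hsum).const_mul a).add_const b
    |>.congr_fderiv ?_
  ext y
  simp [Finset.mul_sum, div_eq_mul_inv, mul_assoc]

theorem log_sub_mul_le {m c : ℝ} (hm : 0 < m) (hc : 0 < c) : log c - c * m ≤ -log m - 1 := by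
  have := log_le_sub_one_of_pos (mul_pos hc hm)
  rw [log_mul hc.ne' hm.ne'] at this
  linarith

theorem isGreatest_log_sub_mul {m : ℝ} (hm : 0 < m) :
    IsGreatest ((fun c => log c - c * m) '' Set.Ioi 0) (-log m - 1) := by
  refine ⟨⟨m⁻¹, inv_pos.mpr hm, ?_⟩, ?_⟩
  · simp [log_inv, inv_mul_cancel₀ hm.ne']
  · rintro _ ⟨c, hc, rfl⟩
    exact log_sub_mul_le hm hc

theorem eq_inv_of_log_sub_mul_eq {m c : ℝ} (hm : 0 < m) (hc : 0 < c)
    (h : log c - c * m = -log m - 1) : c = m⁻¹ := by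
  by_contra hne
  have hlt := log_lt_sub_one_of_pos (mul_pos hc hm) fun h1 => hne (eq_inv_of_mul_eq_one_left h1)
  rw [log_mul hc.ne' hm.ne'] at hlt
  linarith

theorem hjb_log_identity {f ρ Γ K θ S : ℝ} (hρ : ρ ≠ 0) (hθ : 0 < θ) (hS : 0 < S)
    (hθf : θ * f = ρ + Γ / K) :
    ρ * (1 / θ * log S + (Γ - f * θ + f * θ * log θ) / (θ * ρ))
      = -(f * log (1 / θ / S)) - f + Γ * (1 - log S / K) * (1 / θ) := by
  rw [log_div (by positivity) hS.ne', one_div, log_inv]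
  field_simp
  linear_combination (-log S) * hθf

theorem stmt16_general {n : ℕ} (B : Matrix (Fin n) (Fin n) ℝ)
    (hdiag : ∀ i, B i i = 0)
    (F : Finset (Fin n)) (hF : F.Nonempty)
    (Γ K ρ : ℝ) (hΓ : 0 < Γ) (hK : 0 < K) (hρ : 0 < ρ)
    (θstar A Bc : ℝ)
    (hθstar : θstar = (ρ + Γ / K) / F.card)
    (hA : A = 1 / θstar)
    (hBc : Bc = (Γ - F.card * θstar + F.card * θstar * Real.log θstar) / (θstar * ρ))
    (w : (Fin n → ℝ) → ℝ)
    (hw : ∀ x : Fin n → ℝ, w x = A * Real.log (∑ j, x j) + Bc) :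
    ∀ x : Fin n → ℝ, (∀ j, 0 ≤ x j) → x ≠ 0 →
      (0 < A / (∑ j, x j)) ∧
      HasFDerivAt w (dotCLM fun _ => A / (∑ j, x j)) x ∧
      (ρ * w x = -(∑ _i ∈ F, Real.log (A / (∑ j, x j))) - F.card
        + (∑ j, (A / (∑ j, x j)) * (((Dmat B + B)ᵀ *ᵥ x) j))
        + Γ * (1 - Real.log (∑ j, x j) / K) * (∑ j, (A / (∑ j, x j)) * x j)) ∧
      (∀ i ∈ F,
        IsGreatest ((fun c => Real.log c - c * (A / (∑ j, x j))) '' Set.Ioi (0 : ℝ))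
          (-Real.log (A / (∑ j, x j)) - 1) ∧
        ∀ c : ℝ, 0 < c →
          Real.log c - c * (A / (∑ j, x j)) = -Real.log (A / (∑ j, x j)) - 1 →
          c = θstar * (∑ j, x j)) := by
  intro x hx hx0
  have hS := sum_pos_of_nonneg_of_ne_zero hx hx0
  have hf : (0 : ℝ) < F.card := by exact_mod_cast hF.card_pos
  have hθ : 0 < θstar := by rw [hθstar]; positivity
  have hm : 0 < A / ∑ j, x j := by rw [hA]; positivity
  refine ⟨hm, ?_, ?_, fun _ _ => ⟨isGreatest_log_sub_mul hm, fun c hc h => ?_⟩⟩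
  · simpa only [← funext hw] using hasFDerivAt_mul_log_sum_add A Bc hS
  · rw [← Finset.mul_sum, ← Finset.mul_sum,
      sum_transpose_mulVec_eq_zero (Dmat_add_self_mulVec_one hdiag), div_mul_cancel₀ A hS.ne',
      sum_const, nsmul_eq_mul, hw, hA, hBc, mul_zero, add_zero]
    exact hjb_log_identity hρ.ne' hθ hS (by rw [hθstar]; field_simp)
  · rw [eq_inv_of_log_sub_mul_eq hm hc h, hA]
    field_simp

/-- Verification of the social planner's HJB equation in the log framework (S3)(U2):
with `θ* = (ρ + Γ/K)/f`, `A = 1/θ*`, `B = (Γ − fθ* + fθ* ln θ*)/(θ*ρ)`, the function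
`w(x) = A ln⟨e,x⟩ + B` is differentiable on `ℝⁿ₊ \ {0}` with `∂w/∂x_j(x) = A/⟨e,x⟩ > 0`,
satisfies the planner's HJB equation, and for each `i ∈ F` the Hamiltonian supremum is
attained uniquely at `c = θ*⟨e,x⟩`. -/
theorem stmt16 {n : ℕ} (B : Matrix (Fin n) (Fin n) ℝ)
    (hB : ∀ i j, 0 ≤ B i j) (hdiag : ∀ i, B i i = 0)
    (F : Finset (Fin n)) (hF : F.Nonempty)
    (Γ K ρ : ℝ) (hΓ : 0 < Γ) (hK : 0 < K) (hρ : 0 < ρ)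
    (θstar A Bc : ℝ)
    (hθstar : θstar = (ρ + Γ / K) / F.card)
    (hA : A = 1 / θstar)
    (hBc : Bc = (Γ - F.card * θstar + F.card * θstar * Real.log θstar) / (θstar * ρ))
    (w : (Fin n → ℝ) → ℝ)
    (hw : ∀ x : Fin n → ℝ, w x = A * Real.log (∑ j, x j) + Bc) :
    ∀ x : Fin n → ℝ, (∀ j, 0 ≤ x j) → x ≠ 0 →
      (0 < A / (∑ j, x j)) ∧
      HasFDerivAt w (dotCLM fun _ => A / (∑ j, x j)) x ∧
      (ρ * w x = -(∑ _i ∈ F, Real.log (A / (∑ j, x j))) - F.card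
        + (∑ j, (A / (∑ j, x j)) * (((Dmat B + B)ᵀ *ᵥ x) j))
        + Γ * (1 - Real.log (∑ j, x j) / K) * (∑ j, (A / (∑ j, x j)) * x j)) ∧
      (∀ i ∈ F,
        IsGreatest ((fun c => Real.log c - c * (A / (∑ j, x j))) '' Set.Ioi (0 : ℝ))
          (-Real.log (A / (∑ j, x j)) - 1) ∧
        ∀ c : ℝ, 0 < c →
          Real.log c - c * (A / (∑ j, x j)) = -Real.log (A / (∑ j, x j)) - 1 →
          c = θstar * (∑ j, x j)) :=
  stmt16_general B hdiag F hF Γ K ρ hΓ hK hρ θstar A Bc hθstar hA hBc w hw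
end
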